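/- The matrix B of the previous statement has rank q^4 + q^2; equivalently, the trace of (1/v)B, where v = q^2(q-1)(q+1)(q^2+q+1), equals q^4 + q^2. -/

import Mathlib

/-- A point of `P^3(K)`: a 1-dimensional linear subspace of `K^4`. -/
def ProjPt (K : Type*) [Field K] : Type _ :=
  {W : Submodule K (Fin 4 → K) // Module.finrank K W = 1}

/-- A projective line in `P^3(K)`: a 2-dimensional linear subspace of `K^4`. -/
def ProjLine (K : Type*) [Field K] : Type _ :=
  {W : Submodule K (Fin 4 → K) // Module.finrank K W = 2}

/-- Two projective lines meet (at a point) if their intersection is 1-dimensional. -/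
def Meets {K : Type*} [Field K] (l m : ProjLine K) : Prop :=
  Module.finrank K ↥(l.1 ⊓ m.1) = 1

/-- Two projective lines are disjoint (skew) if their intersection is the zero subspace. -/
def LDisjoint {K : Type*} [Field K] (l m : ProjLine K) : Prop :=
  l.1 ⊓ m.1 = ⊥

instance (K : Type*) [Field K] [Fintype K] : Finite (ProjLine K) := by
  unfold ProjLine
  have : Finite (Submodule K (Fin 4 → K)) :=
    Finite.of_injective (fun W => (W : Set (Fin 4 → K))) SetLike.coe_injective
  infer_instance

noncomputable instance (K : Type*) [Field K] [Fintype K] : Fintype (ProjLine K) :=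
  Fintype.ofFinite _

open Classical in
/-- The Cavalieri matrix `B`, indexed by the lines of `P^3(F_q)`, with diagonal entries
`q^4(q^2-1)`, entries `-q^3(q-1)` for crossing pairs and `q(q^2-1)` for disjoint pairs. -/
noncomputable def BMat (K : Type*) [Field K] [Fintype K] :
    Matrix (ProjLine K) (ProjLine K) ℚ :=
  fun l m =>
    if l = m then (Fintype.card K : ℚ) ^ 4 * ((Fintype.card K : ℚ) ^ 2 - 1)
    else if Meets l m then -((Fintype.card K : ℚ) ^ 3 * ((Fintype.card K : ℚ) - 1))
    else (Fintype.card K : ℚ) * ((Fintype.card K : ℚ) ^ 2 - 1)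

/-!
The lines of `P³(F_q)`, adjacent when they meet, form a strongly regular graph with parameters
`(N, q(q+1)², 2q²+q-1, (q+1)²)`: through each of its `q+1` points a line meets `q²+q` others;
two lines meeting in `P` have as common neighbours the other `q²+q-1` lines through `P` and the
`q²` joins of a point of one to a point of the other (both different from `P`), and two skew
lines have the `(q+1)²` such joins. The relation `k(k-λ-1) = (N-k-1)μ` then forces `N = (q²+1)(q²+q+1)`.

Writing `B = c I + b A + a J` with `A` the adjacency matrix and `J` the all-ones matrix,
`A² = kI + λA + μ(J-I-A)` and `AJ = JA = kJ` give `B² = v B`. So `v⁻¹ B` is idempotent, and its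
rank is its trace `N q⁴(q²-1) / v = q⁴ + q²`.
-/

open Module Submodule Finset

namespace SimpleGraph

variable {V R : Type*} {G : SimpleGraph V} [DecidableRel G.Adj] [CommRing R]

theorem adjMatrix_compl [DecidableEq V] :
    Gᶜ.adjMatrix R = Matrix.of 1 - 1 - G.adjMatrix R := by
  ext v w
  by_cases hvw : v = w
  · subst hvw
    simp
  · by_cases hadj : G.Adj v w <;> simp [hvw, hadj, Matrix.one_apply_ne hvw]

variable [Fintype V]

theorem IsRegularOfDegree.adjMatrix_mul_of_one {k : ℕ} (h : G.IsRegularOfDegree k) :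
    G.adjMatrix R * Matrix.of 1 = k • Matrix.of 1 := by
  ext v w
  simp [adjMatrix_mul_apply, h v]

theorem IsRegularOfDegree.of_one_mul_adjMatrix {k : ℕ} (h : G.IsRegularOfDegree k) :
    Matrix.of 1 * G.adjMatrix R = k • Matrix.of 1 := by
  ext v w
  simp [mul_adjMatrix_apply, h w]

theorem _root_.Matrix.of_one_mul_of_one :
    (Matrix.of 1 : Matrix V V R) * Matrix.of 1 = Fintype.card V • Matrix.of 1 := by
  ext v w
  simp [Matrix.mul_apply]

variable [DecidableEq V] {n k ℓ μ : ℕ}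

theorem IsSRGWith.adjMatrix_mul_self (h : G.IsSRGWith n k ℓ μ) :
    G.adjMatrix R * G.adjMatrix R =
      ((k : R) - μ) • 1 + ((ℓ : R) - μ) • G.adjMatrix R + (μ : R) • Matrix.of 1 := by
  rw [← sq, h.matrix_eq, adjMatrix_compl]
  module

theorem IsSRGWith.combination_mul_self (h : G.IsSRGWith n k ℓ μ) (a b c : R) :
    (c • 1 + b • G.adjMatrix R + a • Matrix.of 1) * (c • 1 + b • G.adjMatrix R + a • Matrix.of 1)
      = (c ^ 2 + b ^ 2 * ((k : R) - μ)) • 1 + (2 * b * c + b ^ 2 * ((ℓ : R) - μ)) • G.adjMatrix R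
        + (a ^ 2 * n + 2 * a * b * k + 2 * a * c + b ^ 2 * μ) • Matrix.of 1 := by
  simp only [add_mul, mul_add, Matrix.smul_mul, Matrix.mul_smul, one_mul, mul_one,
    h.adjMatrix_mul_self, h.regular.adjMatrix_mul_of_one, h.regular.of_one_mul_adjMatrix,
    Matrix.of_one_mul_of_one, h.card]
  module

end SimpleGraph

theorem Matrix.rank_eq_trace_of_isIdempotentElem {n K : Type*} [Fintype n] [DecidableEq n]
    [Field K] {P : Matrix n n K} (hP : IsIdempotentElem P) : (P.rank : K) = P.trace := by
  have : IsIdempotentElem (Matrix.toLin' P) := hP.map Matrix.toLinAlgEquiv'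
  rw [Matrix.rank, ← Matrix.toLin'_apply', ← (LinearMap.IsIdempotentElem.isProj_range _ this).trace,
    Matrix.trace_toLin'_eq]

namespace Submodule

variable {K V : Type*} [Field K] [AddCommGroup V] [Module K V] [FiniteDimensional K V]

theorem finrank_sup_eq_two {A B : Submodule K V} (hA : finrank K A = 1) (hB : finrank K B = 1)
    (hAB : A ≠ B) : finrank K ↥(A ⊔ B) = 2 := by
  have hinf : A ⊓ B = ⊥ := by
    by_contra hne
    have h1 : finrank K ↥(A ⊓ B) = 1 := le_antisymm (hA ▸ finrank_mono inf_le_left)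
      (Nat.one_le_iff_ne_zero.2 fun h => hne (finrank_eq_zero.1 h))
    exact hAB ((eq_of_le_of_finrank_eq inf_le_left (h1.trans hA.symm)).symm.trans
      (eq_of_le_of_finrank_eq inf_le_right (h1.trans hB.symm)))
  have := finrank_sup_add_finrank_inf_eq A B
  rw [hinf, finrank_bot, hA, hB] at this
  omega

theorem finrank_inf_le_one {L M : Submodule K V} (hL : finrank K L = 2) (hM : finrank K M = 2)
    (h : L ≠ M) : finrank K ↥(L ⊓ M) ≤ 1 := by
  by_contra! h2
  have hL' : L ⊓ M = L := eq_of_le_of_finrank_le inf_le_left (by rw [hL]; exact h2)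
  have hM' : L ⊓ M = M := eq_of_le_of_finrank_le inf_le_right (by rw [hM]; exact h2)
  exact h (hL'.symm.trans hM')

theorem inf_eq_of_finrank_eq_two {L M P : Submodule K V} (hL : finrank K L = 2)
    (hM : finrank K M = 2) (h : L ≠ M) (hP : finrank K P = 1) (hPL : P ≤ L) (hPM : P ≤ M) :
    L ⊓ M = P :=
  (eq_of_le_of_finrank_le (le_inf hPL hPM) (hP ▸ finrank_inf_le_one hL hM h)).symm

theorem sup_eq_of_finrank_eq_two {L A B : Submodule K V} (hL : finrank K L = 2)
    (hA : finrank K A = 1) (hB : finrank K B = 1) (hAL : A ≤ L) (hBL : B ≤ L) (hAB : A ≠ B) :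
    A ⊔ B = L :=
  eq_of_le_of_finrank_eq (sup_le hAL hBL) (by rw [finrank_sup_eq_two hA hB hAB, hL])

theorem inf_sup_eq_of_not_le {L A B : Submodule K V} (hL : finrank K L = 2)
    (hA : finrank K A = 1) (hB : finrank K B = 1) (hAL : A ≤ L) (hBL : ¬ B ≤ L) :
    L ⊓ (A ⊔ B) = A := by
  have hAB : A ≠ B := by
    rintro rfl
    exact hBL hAL
  refine inf_eq_of_finrank_eq_two hL (finrank_sup_eq_two hA hB hAB) ?_ hA hAL le_sup_left
  rintro rfl
  exact hBL le_sup_right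

end Submodule

open Classical

noncomputable local instance {K V : Type*} [Field K] [Fintype K] [AddCommGroup V] [Module K V]
    [Fintype V] : Fintype (Submodule K V) :=
  Fintype.ofFinite _

section Counting

variable {K V : Type*} [Field K] [Fintype K] [AddCommGroup V] [Module K V] [Fintype V]

local notation "q" => Fintype.card K

theorem card_filter_mem_and_not_mem {U W : Submodule K V} (h : U ≤ W) :
    #{v | v ∈ W ∧ v ∉ U} = q ^ finrank K W - q ^ finrank K U := by
  have hcard (X : Submodule K V) : #{v | v ∈ X} = q ^ finrank K X := by
    rw [← Fintype.card_subtype]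
    exact card_eq_pow_finrank
  have hsub : filter (· ∈ U) univ ⊆ filter (· ∈ W) univ := fun v hv => by
    simp only [mem_filter, mem_univ, true_and] at hv ⊢
    exact h hv
  rw [← hcard, ← hcard, ← card_sdiff_of_subset hsub]
  congr 1
  ext v
  simp

/-- The subspaces `X` with `U ≤ X ≤ W` and `dim X = dim U + 1` partition the vectors of `W \ U`
via `v ↦ U ⊔ K ∙ v`, each one taking `q ^ (dim U + 1) - q ^ dim U` of them. -/
theorem card_covers_mul {U W : Submodule K V} (h : U ≤ W) :
    #{X : Submodule K V | U ≤ X ∧ X ≤ W ∧ finrank K X = finrank K U + 1}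
      * (q ^ (finrank K U + 1) - q ^ finrank K U) = q ^ finrank K W - q ^ finrank K U := by
  have hmaps : ∀ v ∈ ({v | v ∈ W ∧ v ∉ U} : Finset V),
      U ⊔ K ∙ v ∈ ({X | U ≤ X ∧ X ≤ W ∧ finrank K X = finrank K U + 1} : Finset _) := by
    simp only [mem_filter, mem_univ, true_and]
    rintro v ⟨hvW, hvU⟩
    exact ⟨le_sup_left, sup_le h ((span_singleton_le_iff_mem _ _).2 hvW),
      finrank_sup_span_singleton hvU⟩
  rw [← card_filter_mem_and_not_mem h, card_eq_sum_card_fiberwise hmaps, sum_const_nat]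
  simp only [mem_filter, mem_univ, true_and]
  rintro X ⟨hUX, hXW, hX⟩
  rw [← hX, ← card_filter_mem_and_not_mem hUX]
  congr 1
  ext v
  simp only [mem_filter, mem_univ, true_and]
  constructor
  · rintro ⟨⟨-, hvU⟩, rfl⟩
    exact ⟨mem_sup_right (mem_span_singleton_self v), hvU⟩
  · rintro ⟨hvX, hvU⟩
    refine ⟨⟨hXW hvX, hvU⟩, eq_of_le_of_finrank_eq
      (sup_le hUX ((span_singleton_le_iff_mem _ _).2 hvX)) ?_⟩
    rw [finrank_sup_span_singleton hvU, hX]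

noncomputable def points (W : Submodule K V) : Finset (Submodule K V) :=
  {P | P ≤ W ∧ finrank K P = 1}

theorem mem_points {W P : Submodule K V} : P ∈ points W ↔ P ≤ W ∧ finrank K P = 1 := by
  simp [points]

theorem card_points_of_finrank_eq_two {W : Submodule K V} (hW : finrank K W = 2) :
    #(points W) = q + 1 := by
  have h := card_covers_mul (bot_le : ⊥ ≤ W)
  simp only [bot_le, true_and, finrank_bot, zero_add, pow_zero, pow_one, hW] at h
  have hq : 1 < q := Fintype.one_lt_card
  refine Nat.eq_of_mul_eq_mul_right (Nat.sub_pos_of_lt hq) ?_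
  rw [points, h, ← Nat.sq_sub_sq, one_pow]

theorem card_lines_through_point (hV : finrank K V = 4) {P : Submodule K V}
    (hP : finrank K P = 1) : #{X : Submodule K V | P ≤ X ∧ finrank K X = 2} = q ^ 2 + q + 1 := by
  have h := card_covers_mul (le_top : P ≤ ⊤)
  simp only [le_top, true_and, finrank_top, hV, hP, Nat.reduceAdd, pow_one] at h
  have hq : 1 < q := Fintype.one_lt_card
  have hq2 : q < q ^ 2 := by nlinarith
  have hq4 : q ≤ q ^ 4 := Nat.le_self_pow (by norm_num) q
  refine Nat.eq_of_mul_eq_mul_right (Nat.sub_pos_of_lt hq2) ?_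
  rw [h]
  zify [hq2.le, hq4]
  ring

end Counting

section ProjLine

variable {K : Type*} [Field K]

theorem Meets.symm {l m : ProjLine K} (h : Meets l m) : Meets m l := by
  rwa [Meets, inf_comm]

theorem Meets.ne {l m : ProjLine K} (h : Meets l m) : l ≠ m := by
  rintro rfl
  rw [Meets, inf_idem, l.2] at h
  exact absurd h (by norm_num)

variable (K) in
def meetsGraph : SimpleGraph (ProjLine K) where
  Adj := Meets
  symm := ⟨fun _ _ => Meets.symm⟩
  loopless := ⟨fun _ h => h.ne rfl⟩

@[simp]
theorem meetsGraph_adj {l m : ProjLine K} : (meetsGraph K).Adj l m ↔ Meets l m :=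
  Iff.rfl

theorem ProjLine.inf_eq_of_le {l m : ProjLine K} (h : l ≠ m) {P : Submodule K (Fin 4 → K)}
    (hP : finrank K P = 1) (hl : P ≤ l.1) (hm : P ≤ m.1) : l.1 ⊓ m.1 = P :=
  inf_eq_of_finrank_eq_two l.2 m.2 (fun e => h (Subtype.ext e)) hP hl hm

theorem meets_of_le {l m : ProjLine K} (h : l ≠ m) {P : Submodule K (Fin 4 → K)}
    (hP : finrank K P = 1) (hl : P ≤ l.1) (hm : P ≤ m.1) : Meets l m := by
  rw [Meets, ProjLine.inf_eq_of_le h hP hl hm, hP]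

theorem finrank_inf_eq_zero_of_not_meets {l m : ProjLine K} (h : l ≠ m) (hlm : ¬ Meets l m) :
    finrank K ↥(l.1 ⊓ m.1) = 0 := by
  have := finrank_inf_le_one l.2 m.2 (fun e => h (Subtype.ext e))
  rw [Meets] at hlm
  omega

theorem not_le_inf_of_not_meets {l m : ProjLine K} (hne : l ≠ m) (hlm : ¬ Meets l m)
    {A : Submodule K (Fin 4 → K)} (hA : finrank K A = 1) : ¬ A ≤ l.1 ⊓ m.1 := fun h => by
  have := finrank_mono h
  rw [hA, finrank_inf_eq_zero_of_not_meets hne hlm] at this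
  omega

variable [Fintype K]

local notation "q" => Fintype.card K

theorem card_filter_projLine (p : Submodule K (Fin 4 → K) → Prop) :
    #{l : ProjLine K | p l.1} = #{X | p X ∧ finrank K X = 2} := by
  refine card_bij' (fun l _ => l.1) (fun X hX => ⟨X, (mem_filter.1 hX).2.2⟩) ?_ ?_ ?_ ?_
  · intro l hl
    simp only [mem_filter, mem_univ, true_and] at hl ⊢
    exact ⟨hl, l.2⟩
  · intro X hX
    exact mem_filter.2 ⟨mem_univ _, (mem_filter.1 hX).2.1⟩
  · intro l _
    rfl
  · intro X _
    rfl

theorem card_lines_through {P : Submodule K (Fin 4 → K)} (hP : finrank K P = 1) :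
    #{l : ProjLine K | P ≤ l.1} = q ^ 2 + q + 1 := by
  rw [card_filter_projLine]
  exact card_lines_through_point (by simp) hP

theorem card_meets (l : ProjLine K) : #{m | Meets l m} = q * (q + 1) ^ 2 := by
  have hmaps : ∀ m ∈ ({m | Meets l m} : Finset (ProjLine K)), l.1 ⊓ m.1 ∈ points l.1 := by
    intro m hm
    exact mem_points.2 ⟨inf_le_left, (mem_filter.1 hm).2⟩
  rw [card_eq_sum_card_fiberwise hmaps, sum_const_nat (m := q ^ 2 + q),
    card_points_of_finrank_eq_two l.2]
  · ring
  intro P hP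
  obtain ⟨hPl, hP⟩ := mem_points.1 hP
  have hfiber : ({m | Meets l m} : Finset (ProjLine K)).filter (fun m => l.1 ⊓ m.1 = P)
      = ({m | P ≤ m.1} : Finset (ProjLine K)).erase l := by
    ext m
    simp only [mem_filter, mem_univ, true_and, mem_erase]
    constructor
    · rintro ⟨hlm, rfl⟩
      exact ⟨hlm.ne.symm, inf_le_right⟩
    · rintro ⟨hml, hPm⟩
      exact ⟨meets_of_le hml.symm hP hPl hPm, ProjLine.inf_eq_of_le hml.symm hP hPl hPm⟩
  have hl : l ∈ ({m | P ≤ m.1} : Finset (ProjLine K)) := mem_filter.2 ⟨mem_univ l, hPl⟩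
  rw [hfiber, card_erase_of_mem hl, card_lines_through hP]
  rfl

theorem card_transversals (l m : ProjLine K) :
    #{k | Meets l k ∧ Meets m k ∧ l.1 ⊓ k.1 ≠ m.1 ⊓ k.1} =
      #{A ∈ points l.1 | ¬ A ≤ m.1} * #{B ∈ points m.1 | ¬ B ≤ l.1} := by
  rw [← card_product]
  have hsup {k : ProjLine K} (hk : k ∈ ({k | Meets l k ∧ Meets m k ∧ l.1 ⊓ k.1 ≠ m.1 ⊓ k.1} :
      Finset (ProjLine K))) : (l.1 ⊓ k.1) ⊔ (m.1 ⊓ k.1) = k.1 := by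
    obtain ⟨hlk, hmk, hne⟩ := (mem_filter.1 hk).2
    exact sup_eq_of_finrank_eq_two k.2 hlk hmk inf_le_right inf_le_right hne
  refine card_nbij (fun k => (l.1 ⊓ k.1, m.1 ⊓ k.1)) ?_ ?_ ?_
  · intro k hk
    obtain ⟨hlk, hmk, hne⟩ := (mem_filter.1 (mem_coe.1 hk)).2
    have hlk' : finrank K ↥(l.1 ⊓ k.1) = 1 := hlk
    have hmk' : finrank K ↥(m.1 ⊓ k.1) = 1 := hmk
    rw [mem_coe, mem_product, mem_filter, mem_filter, mem_points, mem_points]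
    refine ⟨⟨⟨inf_le_left, hlk⟩, fun hle => hne ?_⟩, ⟨inf_le_left, hmk⟩, fun hle => hne ?_⟩
    · exact eq_of_le_of_finrank_eq (le_inf hle inf_le_right) (hlk'.trans hmk'.symm)
    · exact (eq_of_le_of_finrank_eq (le_inf hle inf_le_right) (hmk'.trans hlk'.symm)).symm
  · intro k hk k' hk' he
    obtain ⟨hl, hm⟩ := Prod.mk.inj he
    exact Subtype.ext ((hsup hk).symm.trans (hl ▸ hm ▸ hsup hk'))
  · rintro ⟨A, B⟩ hAB
    simp only [coe_product, Set.mem_prod, mem_coe, mem_filter, mem_points] at hAB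
    obtain ⟨⟨⟨hAl, hA⟩, hAm⟩, ⟨hBm, hB⟩, hBl⟩ := hAB
    have hAB : A ≠ B := by
      rintro rfl
      exact hAm hBm
    have hlk : l.1 ⊓ (A ⊔ B) = A := inf_sup_eq_of_not_le l.2 hA hB hAl hBl
    have hmk : m.1 ⊓ (A ⊔ B) = B := by
      rw [sup_comm]
      exact inf_sup_eq_of_not_le m.2 hB hA hBm hAm
    refine ⟨(⟨A ⊔ B, finrank_sup_eq_two hA hB hAB⟩ : ProjLine K), ?_, ?_⟩
    · have hlk' : finrank K ↥(l.1 ⊓ (A ⊔ B)) = 1 := by rw [hlk, hA]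
      have hmk' : finrank K ↥(m.1 ⊓ (A ⊔ B)) = 1 := by rw [hmk, hB]
      have hne : l.1 ⊓ (A ⊔ B) ≠ m.1 ⊓ (A ⊔ B) := by rwa [hlk, hmk]
      exact mem_filter.2 ⟨mem_univ _, hlk', hmk', hne⟩
    · simp only [hlk, hmk]

theorem filter_points_not_le_of_meets {l m : ProjLine K} (hlm : Meets l m) :
    {A ∈ points l.1 | ¬ A ≤ m.1} = (points l.1).erase (l.1 ⊓ m.1) := by
  ext A
  simp only [mem_filter, mem_erase, mem_points]
  constructor
  · rintro ⟨⟨hAl, hA⟩, hAm⟩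
    exact ⟨fun h => hAm (h ▸ inf_le_right), hAl, hA⟩
  · rintro ⟨hAP, hAl, hA⟩
    refine ⟨⟨hAl, hA⟩, fun hAm => hAP ?_⟩
    exact eq_of_le_of_finrank_eq (le_inf hAl hAm) (hA.trans (Eq.symm hlm))

theorem filter_points_not_le_of_not_meets {l m : ProjLine K} (hne : l ≠ m) (hlm : ¬ Meets l m) :
    {A ∈ points l.1 | ¬ A ≤ m.1} = points l.1 := by
  refine filter_true_of_mem fun A hA hAm => ?_
  obtain ⟨hAl, hA⟩ := mem_points.1 hA
  exact not_le_inf_of_not_meets hne hlm hA (le_inf hAl hAm)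

theorem filter_meets_meets_inf_eq_of_meets {l m : ProjLine K} (hlm : Meets l m) :
    filter (fun k => (Meets l k ∧ Meets m k) ∧ l.1 ⊓ k.1 = m.1 ⊓ k.1) univ =
      ((filter (fun k => l.1 ⊓ m.1 ≤ k.1) univ).erase l).erase m := by
  have hP : finrank K ↥(l.1 ⊓ m.1) = 1 := hlm
  ext k
  simp only [mem_filter, mem_univ, true_and, mem_erase]
  constructor
  · rintro ⟨⟨hlk, hmk⟩, he⟩
    have hk : l.1 ⊓ k.1 = l.1 ⊓ m.1 := eq_of_le_of_finrank_eq
      (le_inf inf_le_left (he ▸ inf_le_left)) (Eq.trans hlk (Eq.symm hP))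
    exact ⟨hmk.ne.symm, hlk.ne.symm, hk ▸ inf_le_right⟩
  · rintro ⟨hkm, hkl, hPk⟩
    rw [ProjLine.inf_eq_of_le hkl.symm hP inf_le_left hPk,
      ProjLine.inf_eq_of_le hkm.symm hP inf_le_right hPk]
    exact ⟨⟨meets_of_le hkl.symm hP inf_le_left hPk, meets_of_le hkm.symm hP inf_le_right hPk⟩,
      rfl⟩

theorem card_meets_meets_of_meets {l m : ProjLine K} (hlm : Meets l m) :
    #{k | Meets l k ∧ Meets m k} = 2 * q ^ 2 + q - 1 := by
  have hP : finrank K ↥(l.1 ⊓ m.1) = 1 := hlm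
  have hacross : filter (fun k => (Meets l k ∧ Meets m k) ∧ ¬ l.1 ⊓ k.1 = m.1 ⊓ k.1) univ =
      filter (fun k => Meets l k ∧ Meets m k ∧ l.1 ⊓ k.1 ≠ m.1 ⊓ k.1) univ := by
    simp only [and_assoc, ne_eq]
  have hml : m ∈ (filter (fun k => l.1 ⊓ m.1 ≤ k.1) univ).erase l :=
    mem_erase.2 ⟨hlm.ne.symm, mem_filter.2 ⟨mem_univ _, inf_le_right⟩⟩
  have hl : l ∈ filter (fun k => l.1 ⊓ m.1 ≤ k.1) univ := mem_filter.2 ⟨mem_univ _, inf_le_left⟩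
  have hq : 1 < q := Fintype.one_lt_card
  rw [← card_filter_add_card_filter_not (p := fun k => l.1 ⊓ k.1 = m.1 ⊓ k.1), filter_filter,
    filter_filter, filter_meets_meets_inf_eq_of_meets hlm, hacross, card_transversals,
    card_erase_of_mem hml, card_erase_of_mem hl, card_lines_through hP,
    filter_points_not_le_of_meets hlm, filter_points_not_le_of_meets hlm.symm, inf_comm m.1,
    card_erase_of_mem (mem_points.2 ⟨inf_le_left, hP⟩),
    card_erase_of_mem (mem_points.2 ⟨inf_le_right, hP⟩), card_points_of_finrank_eq_two l.2,
    card_points_of_finrank_eq_two m.2]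
  simp only [Nat.add_sub_cancel, ← sq]
  omega

theorem card_meets_meets_of_not_meets {l m : ProjLine K} (hne : l ≠ m) (hlm : ¬ Meets l m) :
    #{k | Meets l k ∧ Meets m k} = (q + 1) ^ 2 := by
  have hsplit : filter (fun k => Meets l k ∧ Meets m k) univ =
      filter (fun k => Meets l k ∧ Meets m k ∧ l.1 ⊓ k.1 ≠ m.1 ⊓ k.1) univ := by
    refine filter_congr fun k _ =>
      ⟨fun ⟨hlk, hmk⟩ => ⟨hlk, hmk, fun he => ?_⟩, fun h => ⟨h.1, h.2.1⟩⟩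
    exact not_le_inf_of_not_meets hne hlm hlk (le_inf inf_le_left (he ▸ inf_le_left))
  rw [hsplit, card_transversals, filter_points_not_le_of_not_meets hne hlm,
    filter_points_not_le_of_not_meets hne.symm fun h => hlm h.symm,
    card_points_of_finrank_eq_two l.2, card_points_of_finrank_eq_two m.2, sq]

theorem card_commonNeighbors (l m : ProjLine K) :
    Fintype.card ((meetsGraph K).commonNeighbors l m) = #{k | Meets l k ∧ Meets m k} := by
  rw [← Set.toFinset_card]
  congr 1
  ext k
  simp [SimpleGraph.mem_commonNeighbors]

theorem meetsGraph_isSRGWith :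
    (meetsGraph K).IsSRGWith (Fintype.card (ProjLine K)) (q * (q + 1) ^ 2) (2 * q ^ 2 + q - 1)
      ((q + 1) ^ 2) where
  card := rfl
  regular l := by
    rw [SimpleGraph.degree, SimpleGraph.neighborFinset_eq_filter]
    exact card_meets l
  of_adj l m hlm := by
    rw [card_commonNeighbors]
    exact card_meets_meets_of_meets hlm
  of_not_adj l m hne hlm := by
    rw [card_commonNeighbors]
    exact card_meets_meets_of_not_meets hne hlm

theorem card_projLine : Fintype.card (ProjLine K) = (q ^ 2 + 1) * (q ^ 2 + q + 1) := by
  have hq : 1 < q := Fintype.one_lt_card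
  have hpos : 0 < Fintype.card (ProjLine K) := by
    have hP : finrank K ↥(K ∙ (Pi.single 0 1 : Fin 4 → K)) = 1 := finrank_span_singleton (by simp)
    obtain ⟨l, -⟩ := card_pos.1 (by rw [card_lines_through hP]; positivity)
    exact Fintype.card_pos_iff.2 ⟨l⟩
  have hparam := meetsGraph_isSRGWith.param_eq _ hpos
  have hk : q * (q + 1) ^ 2 - (2 * q ^ 2 + q - 1) - 1 = q ^ 3 := by
    have : q * (q + 1) ^ 2 = q ^ 3 + 2 * q ^ 2 + q := by ring
    omega
  rw [hk, show q * (q + 1) ^ 2 * q ^ 3 = q ^ 4 * (q + 1) ^ 2 by ring] at hparam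
  have hrest := Nat.eq_of_mul_eq_mul_right (by positivity) hparam
  have : 0 < q ^ 4 := by positivity
  have : (q ^ 2 + 1) * (q ^ 2 + q + 1) = q ^ 4 + q * (q + 1) ^ 2 + 1 := by ring
  omega

theorem BMat_eq_combination : BMat K =
    ((q : ℚ) ^ 4 * ((q : ℚ) ^ 2 - 1) - q * ((q : ℚ) ^ 2 - 1)) • 1
      + (-((q : ℚ) ^ 3 * ((q : ℚ) - 1)) - q * ((q : ℚ) ^ 2 - 1)) • (meetsGraph K).adjMatrix ℚ
      + ((q : ℚ) * ((q : ℚ) ^ 2 - 1)) • Matrix.of 1 := by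
  ext l m
  by_cases hlm : l = m
  · subst hlm
    simp [BMat]
  · by_cases h : Meets l m
    · simp [BMat, hlm, h, SimpleGraph.adjMatrix_apply]
    · simp [BMat, hlm, h, SimpleGraph.adjMatrix_apply]

theorem BMat_mul_self :
    BMat K * BMat K = ((q : ℚ) ^ 2 * ((q : ℚ) ^ 2 - 1) * ((q : ℚ) ^ 2 + q + 1)) • BMat K := by
  have hq : 1 ≤ q := Fintype.card_pos
  rw [BMat_eq_combination, meetsGraph_isSRGWith.combination_mul_self, card_projLine]
  push_cast [Nat.cast_sub (show 1 ≤ 2 * q ^ 2 + q by omega)]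
  module

theorem trace_BMat :
    (BMat K).trace = Fintype.card (ProjLine K) * ((q : ℚ) ^ 4 * ((q : ℚ) ^ 2 - 1)) := by
  simp [Matrix.trace, BMat]

end ProjLine

/-- The Cavalieri matrix `B` has rank `q^4 + q^2`. -/
theorem BMat_rank (K : Type*) [Field K] [Fintype K] :
    (BMat K).rank = Fintype.card K ^ 4 + Fintype.card K ^ 2 := by
  set q := Fintype.card K
  have hq : (2 : ℚ) ≤ q := by exact_mod_cast Fintype.one_lt_card
  set v : ℚ := (q : ℚ) ^ 2 * ((q : ℚ) ^ 2 - 1) * ((q : ℚ) ^ 2 + q + 1)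
  have hv : v ≠ 0 := mul_ne_zero (mul_ne_zero (by positivity) (by nlinarith)) (by positivity)
  have hidem : IsIdempotentElem (v⁻¹ • BMat K) := by
    rw [IsIdempotentElem, smul_mul_smul, BMat_mul_self, smul_smul, inv_mul_cancel_right₀ hv]
  have hrank := Matrix.rank_eq_trace_of_isIdempotentElem hidem
  rw [Matrix.rank_smul_of_mem_nonZeroDivisors _ (mem_nonZeroDivisors_of_ne_zero (inv_ne_zero hv)),
    Matrix.trace_smul, trace_BMat, card_projLine, smul_eq_mul] at hrank
  have : ((BMat K).rank : ℚ) = ((q ^ 4 + q ^ 2 : ℕ) : ℚ) := by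
    rw [hrank]
    field_simp
    push_cast
    ring
  exact_mod_cast this
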